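/- arXiv:2406.16015 — 3 statements merged into one kernel-verified Lean document; each statement's English description precedes it below -/
import Mathlib

section
/- Let G_1, …, G_m be finite subgraphs of the infinite path Path_ℤ, let I ⊆ {1,…,m} be a set containing m, let σ = σ_I be the associated shift permutation, and let σ̃_j be its induced shift permutations. Then for every j ∈ {1,…,m}, Δ⃗(G_{σ̃_j(1)},…,G_{σ̃_j(m)}) ≥ Σ_{i∈I} Δ(G_i ⊖ (G_1 ∪ ⋯ ∪ G_{i−1})). -/
noncomputable section

/-- A finite subgraph of the infinite path `Path_ℤ`, identified with its (finite) edge set: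
the integer `i` encodes the edge `{i-1, i}` of `Path_ℤ`. -/
abbrev PGraph := Finset ℤ

/-- The connected component of the edge `i` in `G`: all edges `j ∈ G` such that every edge
lying between `i` and `j` also belongs to `G`. -/
def comp (G : PGraph) (i : ℤ) : PGraph :=
  G.filter fun j => ∀ l ∈ Finset.Icc (min i j) (max i j), l ∈ G

/-- `Δ(G)`: the number of connected components of `G`. -/
def Delta (G : PGraph) : ℕ := (G.filter fun i => i - 1 ∉ G).card

/-- `λ(G)`: the maximum number of edges of a connected component of `G`. -/
def lam (G : PGraph) : ℕ := G.sup fun i => (comp G i).card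

/-- `G ⊖ F`: the union of the connected components of `G` that are vertex-disjoint from `F`.
(The edges `{i-1,i}` and `{f-1,f}` share a vertex iff `|i - f| ≤ 1`.) -/
def ominus (G F : PGraph) : PGraph :=
  G.filter fun i => ∀ j ∈ comp G i, ∀ f ∈ F, 1 < (j - f).natAbs

/-- `Path_k`: the subgraph of `Path_ℤ` with edges `{i-1,i}` for `1 ≤ i ≤ k`. -/
def pathk (k : ℕ) : PGraph := Finset.Icc 1 (k : ℤ)

/-- `Δ⃗(G_1,…,G_m ∣ F)`. -/
def dvecFrom : PGraph → List PGraph → ℕ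
  | _, [] => 0
  | F, G :: L => Delta (ominus G F) + dvecFrom (F ∪ G) L

/-- `Δ⃗(G_1,…,G_m)`. -/
def dvec (L : List PGraph) : ℕ := dvecFrom ∅ L

def lvecFrom : PGraph → List PGraph → ℕ
  | _, [] => 0
  | F, G :: L => lam (ominus G F) + lvecFrom (F ∪ G) L

/-- `λ⃗(G_1,…,G_m)`. -/
def lvec (L : List PGraph) : ℕ := lvecFrom ∅ L

def ldvecFrom : PGraph → List PGraph → ℕ
  | _, [] => 0
  | F, G :: L => lam (ominus G F) * Delta (ominus G F) + ldvecFrom (F ∪ G) L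

/-- `λΔ⃗(G_1,…,G_m)`. -/
def ldvec (L : List PGraph) : ℕ := ldvecFrom ∅ L

/-- The sequence `G_1, …, G_m` as a list. -/
def seqList {m : ℕ} (G : Fin m → PGraph) : List PGraph := (List.finRange m).map G

/-- `G_1 ∪ ⋯ ∪ G_{j-1}` (the union of the entries strictly before `j`). -/
def unionBelow {m : ℕ} (G : Fin m → PGraph) (j : Fin m) : PGraph :=
  (Finset.univ.filter fun i => i < j).biUnion G

/-- A shift permutation: `σ(j) ≥ j - 1` for all `j`. -/
def IsShiftPerm {m : ℕ} (σ : Equiv.Perm (Fin m)) : Prop :=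
  ∀ j : Fin m, (j : ℕ) ≤ (σ j : ℕ) + 1

/-- The shift permutation `σ_I` (as a function) associated with a set `I` of indices
(0-indexed; in the intended use `I` contains the last index): `σ_I(j)` is the least element
of `I` that is `≥ j` when `j = 0` or `j - 1 ∈ I`, and `j - 1` otherwise. -/
def sigmaFun {m : ℕ} (I : Finset (Fin m)) (j : Fin m) : Fin m :=
  if (j : ℕ) = 0 ∨ ∃ i ∈ I, (i : ℕ) + 1 = (j : ℕ) then
    WithTop.untopD j (I.filter fun a => j ≤ a).min
  else ⟨(j : ℕ) - 1, lt_of_le_of_lt (Nat.sub_le _ 1) j.isLt⟩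

/-- The index set `Ĩ_j` of the induced shift permutation `σ̃_j`: if `j ∈ I`, add all indices
up to the predecessor of `j` in `I`; if `j ∉ I`, add all indices below `j`. -/
def tildeI {m : ℕ} (I : Finset (Fin m)) (j : Fin m) : Finset (Fin m) :=
  if j ∈ I then I ∪ Finset.univ.filter fun a => ∃ b ∈ I, b < j ∧ a ≤ b
  else I ∪ Finset.univ.filter fun a => a < j

/-- The induced shift permutation `σ̃_j := σ_{Ĩ_j}` (as a function). -/
def sigmaTilde {m : ℕ} (I : Finset (Fin m)) (j : Fin m) : Fin m → Fin m :=
  sigmaFun (tildeI I j)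

/-!
For `J := Ĩ_j ⊇ I`, each summand `Δ(G_i ⊖ (G_1 ∪ ⋯ ∪ G_{i-1}))` with `i ∈ J` reappears, only
larger, among the summands of `Δ⃗` in the order `σ_J`: `σ_J` sends the position just after the
predecessor of `i` in `J` to `i`, and every earlier position to an index below `i`, so at that
position less has been removed. This suffices because `G ⊖ F` consists of whole components of
`G`, which makes `Δ(G ⊖ F)` antitone in `F`.
-/

theorem comp_pred_subset {G : PGraph} {i : ℤ} (hi : i ∈ G) : comp G (i - 1) ⊆ comp G i := by
  intro j hj
  simp only [comp, Finset.mem_filter, Finset.mem_Icc] at hj ⊢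
  refine ⟨hj.1, fun l hl => ?_⟩
  rcases eq_or_ne l i with rfl | hne
  · exact hi
  · exact hj.2 l (by omega)

theorem pred_mem_ominus {G F : PGraph} {i : ℤ} (hi : i ∈ ominus G F) (hpred : i - 1 ∈ G) :
    i - 1 ∈ ominus G F := by
  simp only [ominus, Finset.mem_filter] at hi ⊢
  exact ⟨hpred, fun j hj => hi.2 j (comp_pred_subset hi.1 hj)⟩

theorem ominus_subset_ominus (G : PGraph) {F F' : PGraph} (h : F ⊆ F') :
    ominus G F' ⊆ ominus G F := by
  intro i hi
  simp only [ominus, Finset.mem_filter] at hi ⊢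
  exact ⟨hi.1, fun j hj f hf => hi.2 j hj f (h hf)⟩

-- `H` is a union of components of `H'`, so each component of `H` starts where one of `H'` does.
theorem Delta_le_Delta_of_subset {H H' : PGraph} (h : H ⊆ H')
    (hpred : ∀ i ∈ H, i - 1 ∈ H' → i - 1 ∈ H) : Delta H ≤ Delta H' :=
  Finset.card_le_card fun i hi => by
    simp only [Finset.mem_filter] at hi ⊢
    exact ⟨h hi.1, fun h' => hi.2 (hpred i hi.1 h')⟩

theorem Delta_ominus_le_of_subset (G : PGraph) {F F' : PGraph} (h : F ⊆ F') :
    Delta (ominus G F') ≤ Delta (ominus G F) :=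
  Delta_le_Delta_of_subset (ominus_subset_ominus G h) fun _ hi hpred =>
    pred_mem_ominus hi (Finset.mem_filter.1 hpred).1

theorem unionBelow_zero {m : ℕ} (f : Fin (m + 1) → PGraph) : unionBelow f 0 = ∅ := by
  simp [unionBelow]

theorem unionBelow_succ {m : ℕ} (f : Fin (m + 1) → PGraph) (k : Fin m) :
    unionBelow f k.succ = f 0 ∪ unionBelow (Fin.tail f) k := by
  ext x
  simp only [unionBelow, Finset.mem_biUnion, Finset.mem_filter, Finset.mem_univ, true_and,
    Finset.mem_union, Fin.exists_fin_succ, Fin.succ_pos, Fin.succ_lt_succ_iff, Fin.tail]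

theorem dvecFrom_seqList {m : ℕ} (f : Fin m → PGraph) (F : PGraph) :
    dvecFrom F (seqList f) = ∑ k, Delta (ominus (f k) (F ∪ unionBelow f k)) := by
  induction m generalizing F with
  | zero => simp [seqList, dvecFrom]
  | succ m ih =>
    have hcons : seqList f = f 0 :: seqList (Fin.tail f) := by
      simp [seqList, List.finRange_succ, Fin.tail]
    simp only [hcons, dvecFrom, ih, Fin.sum_univ_succ, unionBelow_zero, unionBelow_succ,
      Finset.union_empty, Finset.union_assoc, Fin.tail]

theorem dvec_seqList {m : ℕ} (f : Fin m → PGraph) :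
    dvec (seqList f) = ∑ k, Delta (ominus (f k) (unionBelow f k)) := by
  simp only [dvec, dvecFrom_seqList, Finset.empty_union]

theorem unionBelow_comp_subset {k n : ℕ} (G : Fin n → PGraph) (τ : Fin k → Fin n) {p : Fin k}
    {i : Fin n} (h : ∀ a < p, τ a < i) : unionBelow (fun a => G (τ a)) p ⊆ unionBelow G i := by
  intro x hx
  simp only [unionBelow, Finset.mem_biUnion, Finset.mem_filter, Finset.mem_univ, true_and] at hx ⊢
  obtain ⟨a, ha, hx⟩ := hx
  exact ⟨τ a, h a ha, hx⟩

theorem sum_Delta_ominus_le_dvec_comp {n : ℕ} (G : Fin n → PGraph) (τ : Fin n → Fin n)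
    (J : Finset (Fin n)) (hJ : ∀ i ∈ J, ∃ p, τ p = i ∧ ∀ a < p, τ a < i) :
    ∑ i ∈ J, Delta (ominus (G i) (unionBelow G i)) ≤ dvec (seqList fun a => G (τ a)) := by
  set records := Finset.univ.filter fun p => ∀ a < p, τ a < τ p
  have hinj : Set.InjOn τ records := by
    intro p hp q hq hpq
    by_contra hne
    rcases lt_or_gt_of_ne hne with hlt | hlt
    · exact (Finset.mem_filter.1 hq).2 p hlt |>.ne hpq
    · exact (Finset.mem_filter.1 hp).2 q hlt |>.ne hpq.symm
  have hJ_sub : J ⊆ records.image τ := fun i hi => by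
    obtain ⟨p, rfl, hp⟩ := hJ i hi
    exact Finset.mem_image_of_mem τ (Finset.mem_filter.2 ⟨Finset.mem_univ p, hp⟩)
  calc ∑ i ∈ J, Delta (ominus (G i) (unionBelow G i))
      ≤ ∑ i ∈ records.image τ, Delta (ominus (G i) (unionBelow G i)) :=
        Finset.sum_le_sum_of_subset hJ_sub
    _ = ∑ p ∈ records, Delta (ominus (G (τ p)) (unionBelow G (τ p))) :=
        Finset.sum_image hinj
    _ ≤ ∑ p ∈ records, Delta (ominus (G (τ p)) (unionBelow (fun a => G (τ a)) p)) :=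
        Finset.sum_le_sum fun p hp =>
          Delta_ominus_le_of_subset _ (unionBelow_comp_subset G τ (Finset.mem_filter.1 hp).2)
    _ ≤ ∑ p, Delta (ominus (G (τ p)) (unionBelow (fun a => G (τ a)) p)) :=
        Finset.sum_le_sum_of_subset (Finset.subset_univ _)
    _ = dvec (seqList fun a => G (τ a)) := (dvec_seqList _).symm

theorem sigmaFun_le {m : ℕ} {J : Finset (Fin m)} {a b : Fin m} (hb : b ∈ J) (hab : a ≤ b) :
    sigmaFun J a ≤ b := by
  unfold sigmaFun
  split
  · have hmem : b ∈ J.filter fun c => a ≤ c := Finset.mem_filter.2 ⟨hb, hab⟩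
    obtain ⟨c, hc⟩ := Finset.min_of_mem hmem
    rw [hc, WithTop.untopD_coe]
    exact Finset.min_le_of_eq hmem hc
  · exact Fin.le_def.2 (by simp only; omega)

theorem sigmaFun_eq {m : ℕ} {J : Finset (Fin m)} {p i : Fin m}
    (hp : (p : ℕ) = 0 ∨ ∃ b ∈ J, (b : ℕ) + 1 = p) (hi : i ∈ J) (hpi : p ≤ i)
    (hgap : ∀ b ∈ J, p ≤ b → i ≤ b) : sigmaFun J p = i := by
  have hmin : (J.filter fun c => p ≤ c).min = i :=
    le_antisymm (Finset.min_le (Finset.mem_filter.2 ⟨hi, hpi⟩))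
      (Finset.le_min fun b hb => WithTop.coe_le_coe.2 (hgap b (Finset.mem_filter.1 hb).1
        (Finset.mem_filter.1 hb).2))
  rw [sigmaFun, if_pos hp, hmin, WithTop.untopD_coe]

theorem exists_sigmaFun_eq {m : ℕ} {J : Finset (Fin m)} {i : Fin m} (hi : i ∈ J) :
    ∃ p, sigmaFun J p = i ∧ ∀ a < p, sigmaFun J a < i := by
  by_cases hbelow : (J.filter (· < i)).Nonempty
  · set b := (J.filter (· < i)).max' hbelow
    obtain ⟨hbJ, hbi⟩ := Finset.mem_filter.1 (Finset.max'_mem _ hbelow)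
    have hgap : ∀ c ∈ J, b < c → i ≤ c := fun c hc hbc =>
      not_lt.1 fun hci => (Finset.le_max' _ c (Finset.mem_filter.2 ⟨hc, hci⟩)).not_gt hbc
    refine ⟨⟨b + 1, Nat.lt_of_le_of_lt hbi i.isLt⟩, sigmaFun_eq (Or.inr ⟨b, hbJ, rfl⟩) hi hbi
      (fun c hc hpc => hgap c hc (Fin.lt_def.2 hpc)), fun a ha => ?_⟩
    exact (sigmaFun_le hbJ (Fin.le_def.2 (Nat.lt_succ_iff.1 ha))).trans_lt hbi
  · refine ⟨⟨0, Nat.zero_lt_of_lt i.isLt⟩,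
      sigmaFun_eq (Or.inl rfl) hi (Fin.le_def.2 (Nat.zero_le _))
        (fun c hc _ => not_lt.1 fun hci => hbelow ⟨c, Finset.mem_filter.2 ⟨hc, hci⟩⟩),
      fun a ha => absurd (Fin.lt_def.1 ha) (Nat.not_lt_zero _)⟩

theorem subset_tildeI {m : ℕ} (I : Finset (Fin m)) (j : Fin m) : I ⊆ tildeI I j := by
  unfold tildeI
  split <;> exact Finset.subset_union_left

theorem induced_shift_lower_bound_general (m : ℕ) (G : Fin (m + 1) → PGraph)
    (I : Finset (Fin (m + 1))) (j : Fin (m + 1)) :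
    ∑ i ∈ I, Delta (ominus (G i) (unionBelow G i)) ≤
      dvec (seqList fun a => G (sigmaTilde I j a)) :=
  calc ∑ i ∈ I, Delta (ominus (G i) (unionBelow G i))
      ≤ ∑ i ∈ tildeI I j, Delta (ominus (G i) (unionBelow G i)) :=
        Finset.sum_le_sum_of_subset (subset_tildeI I j)
    _ ≤ dvec (seqList fun a => G (sigmaTilde I j a)) :=
        sum_Delta_ominus_le_dvec_comp G _ _ fun _ hi => exists_sigmaFun_eq hi

/-- **Lemma 5.3.**  For every set `I` of indices containing the last one, with associated shift
permutation `σ_I` and induced shift permutations `σ̃_j`, and every `j`,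
`Δ⃗(G_{σ̃_j(1)},…,G_{σ̃_j(m)}) ≥ Σ_{i ∈ I} Δ(G_i ⊖ (G_1 ∪ ⋯ ∪ G_{i-1}))`. -/
theorem induced_shift_lower_bound (m : ℕ) (G : Fin (m + 1) → PGraph)
    (I : Finset (Fin (m + 1))) (hI : Fin.last m ∈ I) (j : Fin (m + 1)) :
    ∑ i ∈ I, Delta (ominus (G i) (unionBelow G i)) ≤
      dvec (seqList fun a => G (sigmaTilde I j a)) :=
  induced_shift_lower_bound_general m G I j
end
end

section
/- Suppose T = ⟦T_1,…,T_m⟧ where each T_j is a G_j-join tree for finite subgraphs G_1,…,G_m of the infinite path Path_ℤ. Then for every j ∈ {1,…,m}, Ψ(T) ≥ Ψ(T_j) + Δ⃗(G_1,…,G_m | G_j). -/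
noncomputable section

/-- Join trees: finite binary trees whose leaves are labelled by subgraphs of `Path_ℤ`. -/
inductive JoinTree where
  | leaf : PGraph → JoinTree
  | node : JoinTree → JoinTree → JoinTree

namespace JoinTree

/-- The graph labelling a node (the label of an internal node is the union of the labels
of its children). -/
def graph : JoinTree → PGraph
  | leaf G => G
  | node T₁ T₂ => T₁.graph ∪ T₂.graph

/-- A join tree is valid if each leaf is labelled by a single-edge graph or by `∅`. -/
def valid : JoinTree → Prop
  | leaf G => G.card ≤ 1
  | node T₁ T₂ => T₁.valid ∧ T₂.valid

/-- The lists `B_1, …, B_ℓ` of sibling labels (top to bottom, ending with the leaf label)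
along each root-to-leaf branch. -/
def branches : JoinTree → List (List PGraph)
  | leaf G => [[G]]
  | node T₁ T₂ =>
    ((branches T₁).map fun b => T₂.graph :: b) ++ ((branches T₂).map fun b => T₁.graph :: b)

end JoinTree

/-- `Ψ(T)`: the maximum of `Δ⃗(C_1,…,C_r)` over all `T`-branch coverings `{C_1,…,C_r}` of the
root graph and all enumerations `C_1,…,C_r` of them. -/
def Psi (T : JoinTree) : ℕ :=
  (T.branches.map fun b => ((b.dedup.permutations).map dvec).foldr max 0).foldr max 0

/-- `[T_1,…,T_m] = T_1 ∪ [T_2,…,T_m]`. -/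
def sqComb : (m : ℕ) → (Fin (m + 1) → JoinTree) → JoinTree
  | 0, T => T 0
  | m + 1, T => JoinTree.node (T 0) (sqComb m fun i => T i.succ)

/-- `⟦T_1,…,T_m⟧ = ⟦T_1,…,T_{m-1}⟧ ∪ ⟦T_1,…,T_{m-2},T_m⟧`. -/
def semComb : (m : ℕ) → (Fin (m + 1) → JoinTree) → JoinTree
  | 0, T => T 0
  | m + 1, T =>
    JoinTree.node (semComb m fun i => T i.castSucc)
      (semComb m fun i => if (i : ℕ) = m then T (Fin.last (m + 1)) else T i.castSucc)

/-- `T` is expressible by nesting `[·]` operations to depth `≤ d`, starting from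
single-node join trees. -/
inductive SqDepthLE : ℕ → JoinTree → Prop
  | base (d : ℕ) (G : PGraph) : SqDepthLE d (JoinTree.leaf G)
  | step (d m : ℕ) (T : Fin (m + 1) → JoinTree) (h : ∀ i, SqDepthLE d (T i)) :
      SqDepthLE (d + 1) (sqComb m T)

/-- The `[·]`-depth of a join tree: the minimum nesting depth of `[·]` operations
required to express it. -/
def sqDepth (T : JoinTree) : ℕ := sInf {d | SqDepthLE d T}

/-- `T` is expressible by nesting `⟦·⟧` operations to depth `≤ d`, starting from
single-node join trees. -/
inductive SemDepthLE : ℕ → JoinTree → Prop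
  | base (d : ℕ) (G : PGraph) : SemDepthLE d (JoinTree.leaf G)
  | step (d m : ℕ) (T : Fin (m + 1) → JoinTree) (h : ∀ i, SemDepthLE d (T i)) :
      SemDepthLE (d + 1) (semComb m T)

/-- The `⟦·⟧`-depth of a join tree: the minimum nesting depth of `⟦·⟧` operations
required to express it. -/
def semDepth (T : JoinTree) : ℕ := sInf {d | SemDepthLE d T}

/-!
Write `⟦T_1,…,T_{m+1}⟧ = A ∪ B` with `A = ⟦T_1,…,T_m⟧` and `B = ⟦T_1,…,T_{m-1},T_{m+1}⟧`.
Every branch covering of `A` extends to one of `A ∪ B` by the graph of `B`; appending that graph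
to an enumeration adds exactly its components that do not touch `A`, so
`Ψ(A ∪ B) ≥ Ψ(A) + Δ(B ⊖ A)`, and symmetrically for `B`. By induction on `m`, for `j ≤ m` one goes
through `A`, where the added term is `Δ(G_{m+1} ⊖ (G_1 ∪ ⋯ ∪ G_m))`, and for `j = m + 1` through
`B`, where it is `Δ(G_m ⊖ (G_1 ∪ ⋯ ∪ G_{m-1} ∪ G_{m+1}))`; these are precisely the terms by which
`Δ⃗(G_1,…,G_{m+1} ∣ G_j)` exceeds the sum given by the induction hypothesis.
-/

lemma self_mem_comp {G : PGraph} {i : ℤ} (hi : i ∈ G) : i ∈ comp G i :=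
  Finset.mem_filter.mpr ⟨hi, fun l hl => by
    rw [Finset.mem_Icc, min_self, max_self] at hl
    rwa [le_antisymm hl.2 hl.1]⟩

lemma comp_mono {G H : PGraph} (h : G ⊆ H) (i : ℤ) : comp G i ⊆ comp H i := fun _ hj =>
  have hj := Finset.mem_filter.mp hj
  Finset.mem_filter.mpr ⟨h hj.1, fun l hl => h (hj.2 l hl)⟩

lemma ominus_eq_empty_of_subset {G F : PGraph} (h : G ⊆ F) : ominus G F = ∅ :=
  Finset.filter_false_of_mem fun i hi hfar => by
    have := hfar i (self_mem_comp hi) i (h hi)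
    omega

lemma Delta_ominus_of_subset {G F : PGraph} (h : G ⊆ F) : Delta (ominus G F) = 0 := by
  rw [ominus_eq_empty_of_subset h]
  rfl

/-- The first edge of `F` met on the way out of the component of `i` in `G` would be adjacent
to that component. -/
lemma comp_union_subset {F G X : PGraph} (hFX : F ⊆ X) {i : ℤ} (hi : i ∈ G)
    (hfar : ∀ j ∈ comp G i, ∀ f ∈ X, 1 < (j - f).natAbs) :
    comp (F ∪ G) i ⊆ comp G i := by
  intro j hj
  simp only [comp, Finset.mem_filter, Finset.mem_union] at hj ⊢
  suffices hG : ∀ l ∈ Finset.Icc (min i j) (max i j), l ∈ G from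
    ⟨hG j (by simp), hG⟩
  by_contra! hout
  obtain ⟨l, hl, hmin⟩ := ((Finset.Icc (min i j) (max i j)).filter (· ∉ G)).exists_min_image
    (fun l => (l - i).natAbs) (by simpa [Finset.filter_nonempty_iff] using hout)
  simp only [Finset.mem_filter, Finset.mem_Icc] at hl hmin
  have hli : l ≠ i := fun h => hl.2 (h ▸ hi)
  obtain ⟨l', hl'⟩ : ∃ l', (l < i ∧ l' = l + 1) ∨ (i < l ∧ l' = l - 1) := by
    rcases hli.lt_or_gt with h | h
    exacts [⟨l + 1, .inl ⟨h, rfl⟩⟩, ⟨l - 1, .inr ⟨h, rfl⟩⟩]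
  have hl'comp : l' ∈ comp G i := by
    suffices hbetween : ∀ k ∈ Finset.Icc (min i l') (max i l'), k ∈ G from
      Finset.mem_filter.mpr ⟨hbetween l' (by simp), hbetween⟩
    intro k hk
    simp only [Finset.mem_Icc] at hk
    by_contra hkG
    have := hmin k ⟨⟨by omega, by omega⟩, hkG⟩
    omega
  have hlX : l ∈ X := hFX ((hj.2 l (Finset.mem_Icc.mpr hl.1)).resolve_right hl.2)
  have := hfar l' hl'comp l hlX
  omega

lemma ominus_union_of_subset {F G X : PGraph} (h : F ⊆ X) :
    ominus (F ∪ G) X = ominus G X := by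
  ext i
  simp only [ominus, Finset.mem_filter, Finset.mem_union]
  constructor
  · rintro ⟨hi, hfar⟩
    have hiX : i ∉ X := fun hiX => by
      have := hfar i (self_mem_comp (Finset.mem_union.mpr hi)) i hiX
      omega
    exact ⟨hi.resolve_left (hiX <| h ·),
      fun j hj => hfar j (comp_mono Finset.subset_union_right i hj)⟩
  · rintro ⟨hi, hfar⟩
    exact ⟨.inr hi, fun j hj => hfar j (comp_union_subset h hi hfar hj)⟩

def listUnion (L : List PGraph) : PGraph := L.toFinset.sup id

lemma listUnion_cons (G : PGraph) (L : List PGraph) :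
    listUnion (G :: L) = G ∪ listUnion L := by
  simp [listUnion]

lemma listUnion_append (L M : List PGraph) :
    listUnion (L ++ M) = listUnion L ∪ listUnion M := by
  simp [listUnion, List.toFinset_append, Finset.sup_union]

lemma listUnion_singleton (G : PGraph) : listUnion [G] = G := by
  simp [listUnion]

lemma subset_listUnion {G : PGraph} {L : List PGraph} (h : G ∈ L) : G ⊆ listUnion L :=
  Finset.le_sup (f := id) (List.mem_toFinset.mpr h)

lemma listUnion_dedup_of_perm {L M : List PGraph} (h : L.Perm M.dedup) :
    listUnion L = listUnion M := by
  rw [listUnion, listUnion, List.toFinset_eq_of_perm _ _ h]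
  congr 1
  ext
  simp

lemma dvecFrom_append_singleton (F : PGraph) (L : List PGraph) (G : PGraph) :
    dvecFrom F (L ++ [G]) = dvecFrom F L + Delta (ominus G (F ∪ listUnion L)) := by
  induction L generalizing F with
  | nil => simp [dvecFrom, listUnion]
  | cons H L ih => simp [dvecFrom, ih, listUnion_cons, Finset.union_assoc, Nat.add_assoc]

lemma foldr_max_mem {L : List ℕ} (h : L ≠ []) : L.foldr max 0 ∈ L :=
  List.maximum_mem (List.foldr_max_of_ne_nil h).symm

lemma dvec_le_Psi {T : JoinTree} {b q : List PGraph} (hb : b ∈ T.branches)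
    (hq : q.Perm b.dedup) : dvec q ≤ Psi T :=
  List.le_max_of_le (List.mem_map_of_mem hb)
    (List.le_max_of_le (List.mem_map_of_mem (List.mem_permutations.mpr hq)) le_rfl)

lemma branches_ne_nil (T : JoinTree) : T.branches ≠ [] := by
  induction T with
  | leaf G => simp [JoinTree.branches]
  | node T₁ T₂ ih₁ _ => simp [JoinTree.branches, ih₁]

lemma exists_dvec_eq_Psi (T : JoinTree) :
    ∃ b ∈ T.branches, ∃ q : List PGraph, q.Perm b.dedup ∧ dvec q = Psi T := by
  obtain ⟨b, hb, hPsi⟩ := List.mem_map.mp (foldr_max_mem (by simpa using branches_ne_nil T))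
  obtain ⟨q, hq, hdvec⟩ := List.mem_map.mp
    (foldr_max_mem (List.ne_nil_of_mem
      (List.mem_map_of_mem (List.mem_permutations.mpr (.refl b.dedup)))))
  exact ⟨b, hb, q, List.mem_permutations.mp hq, hdvec.trans hPsi⟩

lemma listUnion_of_mem_branches {T : JoinTree} {b : List PGraph} (hb : b ∈ T.branches) :
    listUnion b = T.graph := by
  induction T generalizing b with
  | leaf G =>
    obtain rfl := List.mem_singleton.mp hb
    simp [listUnion, JoinTree.graph]
  | node T₁ T₂ ih₁ ih₂ =>
    simp only [JoinTree.branches, List.mem_append, List.mem_map] at hb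
    rcases hb with ⟨b, hb, rfl⟩ | ⟨b, hb, rfl⟩
    · rw [listUnion_cons, ih₁ hb, JoinTree.graph, Finset.union_comm]
    · rw [listUnion_cons, ih₂ hb, JoinTree.graph]

/-- Append `X` to an optimal enumeration of a branch covering of `A`. -/
lemma Psi_add_Delta_le {A T : JoinTree} {X : PGraph}
    (hAT : ∀ b ∈ A.branches, X :: b ∈ T.branches) :
    Psi A + Delta (ominus X A.graph) ≤ Psi T := by
  obtain ⟨b, hb, q, hq, hPsi⟩ := exists_dvec_eq_Psi A
  have hqA : listUnion q = A.graph :=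
    (listUnion_dedup_of_perm hq).trans (listUnion_of_mem_branches hb)
  by_cases hXb : X ∈ b
  · rw [Delta_ominus_of_subset (listUnion_of_mem_branches hb ▸ subset_listUnion hXb), ← hPsi]
    exact dvec_le_Psi (hAT b hb) (by rwa [List.dedup_cons_of_mem hXb])
  · have hperm : (q ++ [X]).Perm (X :: b).dedup := by
      rw [List.dedup_cons_of_notMem hXb]
      exact (List.perm_append_singleton _ _).trans (hq.cons X)
    calc Psi A + Delta (ominus X A.graph) = dvec (q ++ [X]) := by
          rw [dvec, dvecFrom_append_singleton, Finset.empty_union, hqA, ← hPsi, dvec]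
      _ ≤ Psi T := dvec_le_Psi (hAT b hb) hperm

lemma Psi_node_left (A B : JoinTree) :
    Psi A + Delta (ominus B.graph A.graph) ≤ Psi (.node A B) :=
  Psi_add_Delta_le fun b hb => by simp [JoinTree.branches, hb]

lemma Psi_node_right (A B : JoinTree) :
    Psi B + Delta (ominus A.graph B.graph) ≤ Psi (.node A B) :=
  Psi_add_Delta_le fun b hb => by simp [JoinTree.branches, hb]

lemma seqList_succ {m : ℕ} (G : Fin (m + 1) → PGraph) :
    seqList G = seqList (fun i => G i.castSucc) ++ [G (Fin.last m)] := by
  simp only [seqList, ← List.ofFn_eq_map, List.ofFn_succ', List.concat_eq_append]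

lemma seqList_skip {m : ℕ} (T : Fin (m + 2) → JoinTree) :
    (seqList fun i : Fin (m + 1) =>
        (if (i : ℕ) = m then T (Fin.last (m + 1)) else T i.castSucc).graph) =
      (seqList fun i : Fin m => (T i.castSucc.castSucc).graph) ++
        [(T (Fin.last (m + 1))).graph] := by
  simp [seqList_succ (m := m), Nat.ne_of_lt]

lemma graph_semComb (m : ℕ) (T : Fin (m + 1) → JoinTree) :
    (semComb m T).graph = listUnion (seqList fun i => (T i).graph) := by
  induction m with
  | zero => exact (listUnion_singleton _).symm
  | succ m ih =>
    rw [semComb, JoinTree.graph, ih, ih, seqList_skip, seqList_succ (m := m + 1),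
      seqList_succ (m := m)]
    ext
    simp only [listUnion_append, listUnion_singleton, Finset.mem_union]
    tauto

section SemCombSucc

variable {m : ℕ} (T : Fin (m + 2) → JoinTree)

lemma graph_semComb_castSucc :
    (semComb m fun i => T i.castSucc).graph =
      listUnion (seqList fun i : Fin m => (T i.castSucc.castSucc).graph) ∪
        (T (Fin.last m).castSucc).graph := by
  rw [graph_semComb, seqList_succ, listUnion_append, listUnion_singleton]

lemma graph_semComb_skip :
    (semComb m fun i => if (i : ℕ) = m then T (Fin.last (m + 1)) else T i.castSucc).graph =
      listUnion (seqList fun i : Fin m => (T i.castSucc.castSucc).graph) ∪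
        (T (Fin.last (m + 1))).graph := by
  rw [graph_semComb, seqList_skip, listUnion_append, listUnion_singleton]

lemma Psi_semComb_succ_castSucc (j : Fin (m + 1))
    (ih : Psi (T j.castSucc) + dvecFrom (T j.castSucc).graph
        (seqList fun i : Fin (m + 1) => (T i.castSucc).graph) ≤
      Psi (semComb m fun i => T i.castSucc)) :
    Psi (T j.castSucc) + dvecFrom (T j.castSucc).graph (seqList fun i => (T i).graph) ≤
      Psi (semComb (m + 1) T) := by
  set A := semComb m fun i => T i.castSucc
  set B := semComb m fun i => if (i : ℕ) = m then T (Fin.last (m + 1)) else T i.castSucc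
  have hGj : (T j.castSucc).graph ⊆ A.graph := by
    rw [graph_semComb]
    exact subset_listUnion (List.mem_map_of_mem (List.mem_finRange j))
  have hBA : ominus B.graph A.graph = ominus (T (Fin.last (m + 1))).graph A.graph := by
    rw [graph_semComb_skip]
    exact ominus_union_of_subset (graph_semComb_castSucc T ▸ Finset.subset_union_left)
  calc _ = Psi (T j.castSucc) + dvecFrom (T j.castSucc).graph
          (seqList fun i : Fin (m + 1) => (T i.castSucc).graph) +
          Delta (ominus (T (Fin.last (m + 1))).graph A.graph) := by
        rw [seqList_succ, dvecFrom_append_singleton, ← graph_semComb,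
          Finset.union_eq_right.mpr hGj, add_assoc]
    _ ≤ Psi A + Delta (ominus B.graph A.graph) := by rw [hBA]; gcongr
    _ ≤ Psi (semComb (m + 1) T) := Psi_node_left A B

lemma Psi_semComb_succ_last
    (ih : Psi (T (Fin.last (m + 1))) + dvecFrom (T (Fin.last (m + 1))).graph
        (seqList fun i : Fin (m + 1) =>
          (if (i : ℕ) = m then T (Fin.last (m + 1)) else T i.castSucc).graph) ≤
      Psi (semComb m fun i => if (i : ℕ) = m then T (Fin.last (m + 1)) else T i.castSucc)) :
    Psi (T (Fin.last (m + 1))) + dvecFrom (T (Fin.last (m + 1))).graph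
        (seqList fun i => (T i).graph) ≤
      Psi (semComb (m + 1) T) := by
  set A := semComb m fun i => T i.castSucc
  set B := semComb m fun i => if (i : ℕ) = m then T (Fin.last (m + 1)) else T i.castSucc
  set G := (T (Fin.last (m + 1))).graph
  set L := seqList fun i : Fin m => (T i.castSucc.castSucc).graph
  have hAB :
      ominus A.graph B.graph = ominus (T (Fin.last m).castSucc).graph (G ∪ listUnion L) := by
    rw [graph_semComb_castSucc, graph_semComb_skip, Finset.union_comm _ G,
      ominus_union_of_subset Finset.subset_union_right]
  have hself : ∀ F, Delta (ominus G (G ∪ F)) = 0 := fun F =>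
    Delta_ominus_of_subset Finset.subset_union_left
  rw [seqList_skip, dvecFrom_append_singleton, hself, add_zero] at ih
  calc _ = Psi (T (Fin.last (m + 1))) + dvecFrom G L + Delta (ominus A.graph B.graph) := by
        rw [seqList_succ, seqList_succ, dvecFrom_append_singleton, dvecFrom_append_singleton,
          hself, hAB]
        ring
    _ ≤ Psi B + Delta (ominus A.graph B.graph) := by gcongr
    _ ≤ Psi (semComb (m + 1) T) := Psi_node_right A B

end SemCombSucc

theorem psi_semComb_single_general (m : ℕ) (T : Fin (m + 1) → JoinTree)
    (j : Fin (m + 1)) :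
    Psi (T j) + dvecFrom ((T j).graph) (seqList fun i => (T i).graph) ≤
      Psi (semComb m T) := by
  induction m with
  | zero =>
    obtain rfl := Fin.fin_one_eq_zero j
    have hself : dvecFrom (T 0).graph [(T 0).graph] = 0 := by
      simp [dvecFrom, Delta_ominus_of_subset]
    exact (Nat.add_le_add_left hself.le _).trans_eq rfl
  | succ m ih =>
    induction j using Fin.lastCases with
    | cast j => exact Psi_semComb_succ_castSucc T j (ih (fun i => T i.castSucc) j)
    | last =>
      have ih_skip :=
        ih (fun i => if (i : ℕ) = m then T (Fin.last (m + 1)) else T i.castSucc) (Fin.last m)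
      simp only [Fin.val_last, ↓reduceIte] at ih_skip
      exact Psi_semComb_succ_last T ih_skip

/-- **Corollary 5.6.**  Suppose `T = ⟦T_1,…,T_m⟧` where `T_j` is a `G_j`-join tree.  Then for
every `j`, `Ψ(T) ≥ Ψ(T_j) + Δ⃗(G_1,…,G_m ∣ G_j)`. -/
theorem psi_semComb_single (m : ℕ) (T : Fin (m + 1) → JoinTree) (hval : ∀ i, (T i).valid)
    (j : Fin (m + 1)) :
    Psi (T j) + dvecFrom ((T j).graph) (seqList fun i => (T i).graph) ≤
      Psi (semComb m T) :=
  psi_semComb_single_general m T j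
end
end

section
/- Suppose G_1, …, G_m are finite subgraphs of the infinite path Path_ℤ with G_1 ∪ ⋯ ∪ G_m = Path_k (k ≥ 1), and let g := gap(G_1,…,G_m). Then there exists a shift permutation σ of {1,…,m} such that λ⃗(G_{σ(1)},…,G_{σ(m)}) ≥ (g − max_{j∈{1,…,m}} λ(G_j))/2. -/
/-!
Fix `y ∈ [0, k]`, the edge `n` of `Path_k` nearest to it, and a graph `G_j ∋ n`. Walk as
follows: if the component `C` of the current edge in `G_j` meets no earlier graph, it survives
into the residual union and we stop; otherwise let `G_t` be the first earlier graph meeting `C`,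
and move to an edge of `G_t` adjacent to `C`. The step `t → j` covers at most
`|C| ≤ λ(G_j ⊖ (G_1 ∪ ⋯ ∪ G_{t-1}))` edges, which is what `G_j` contributes to `λ⃗` once a shift
permutation moves it right behind `G_1, …, G_{t-1}`. The steps of odd and of even rank along the
walk use disjoint index intervals `[t, j]`, so each parity class is realised by one shift
permutation. The residual edge `z` where the walk ends is thus within `2 max_σ λ⃗(G_σ)` of `n`,
and the midpoint of its residual component within another `max_j λ(G_j) / 2`.
-/

noncomputable section

/-- The midpoint `(s+t)/2` (as a real number) of the connected component `Path_{s,t}` of `H`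
containing the edge `i`. -/
def midpt (H : PGraph) (i : ℤ) : ℝ :=
  (((WithTop.untopD i (comp H i).min : ℤ) : ℝ) - 1 +
    ((WithBot.unbotD i (comp H i).max : ℤ) : ℝ)) / 2

/-- The union `⋃_{j=1}^m (G_j ⊖ (G_1 ∪ ⋯ ∪ G_{j-1}))`. -/
def residUnion {m : ℕ} (G : Fin m → PGraph) : PGraph :=
  Finset.univ.biUnion fun j => ominus (G j) (unionBelow G j)

/-- The largest distance from a point of the real interval `[0,k]` to the nearest midpoint of a
connected component of `H`. -/
def gapOf (k : ℕ) (H : PGraph) : ℝ :=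
  ⨆ y : Set.Icc (0 : ℝ) (k : ℝ), sInf ((fun i => |midpt H i - (y : ℝ)|) '' (H : Set ℤ))

/-- `gap(G_1,…,G_m)` for a covering `G_1 ∪ ⋯ ∪ G_m = Path_k`. -/
def gapSeq (k : ℕ) {m : ℕ} (G : Fin m → PGraph) : ℝ := gapOf k (residUnion G)

section Components

variable {G H F : PGraph} {i j x y : ℤ}

def VertexDisjoint (C F : PGraph) : Prop := ∀ c ∈ C, ∀ f ∈ F, 1 < (c - f).natAbs

lemma mem_comp : j ∈ comp G i ↔ j ∈ G ∧ ∀ l, min i j ≤ l → l ≤ max i j → l ∈ G := by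
  simp only [comp, Finset.mem_filter, Finset.mem_Icc, and_imp]

lemma comp_subset : comp G i ⊆ G := Finset.filter_subset _ _

lemma mem_comp_self (h : i ∈ G) : i ∈ comp G i :=
  mem_comp.2 ⟨h, fun l h₁ h₂ => by rwa [show l = i by omega]⟩

lemma mem_of_mem_comp (h : j ∈ comp G i) : i ∈ G :=
  (mem_comp.1 h).2 i (min_le_left _ _) (le_max_left _ _)

lemma mem_comp_of_le_of_le (hx : x ∈ comp G i) (hz : j ∈ comp G i) (hxy : x ≤ y) (hyj : y ≤ j) :
    y ∈ comp G i := by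
  rw [mem_comp] at hx hz ⊢
  have key : ∀ l, min i y ≤ l → l ≤ max i y → l ∈ G := fun l h₁ h₂ => by
    rcases le_total l i with h | h
    · exact hx.2 l (by omega) (by omega)
    · exact hz.2 l (by omega) (by omega)
  exact ⟨key y (by omega) (by omega), key⟩

lemma mem_comp_of_adjacent (hx : x ∈ comp G i) (hy : y ∈ G) (hxy : (x - y).natAbs ≤ 1) :
    y ∈ comp G i := by
  refine mem_comp.2 ⟨hy, fun l h₁ h₂ => ?_⟩
  by_cases hl : l = y
  · exact hl ▸ hy
  · exact (mem_comp.1 hx).2 l (by omega) (by omega)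

lemma comp_eq_of_mem (h : j ∈ comp G i) : comp G j = comp G i := by
  obtain ⟨-, hjI⟩ := mem_comp.1 h
  ext l
  rw [mem_comp, mem_comp]
  refine and_congr_right fun _ => ⟨fun hl x h₁ h₂ => ?_, fun hl x h₁ h₂ => ?_⟩
  · rcases (by omega : (min i j ≤ x ∧ x ≤ max i j) ∨ (min j l ≤ x ∧ x ≤ max j l)) with h | h
    exacts [hjI x h.1 h.2, hl x h.1 h.2]
  · rcases (by omega : (min i j ≤ x ∧ x ≤ max i j) ∨ (min i l ≤ x ∧ x ≤ max i l)) with h | h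
    exacts [hjI x h.1 h.2, hl x h.1 h.2]

lemma comp_eq_Icc (h : i ∈ G) :
    comp G i = Finset.Icc ((comp G i).min' ⟨i, mem_comp_self h⟩)
      ((comp G i).max' ⟨i, mem_comp_self h⟩) :=
  Finset.Subset.antisymm
    (fun _ hx => Finset.mem_Icc.2 ⟨Finset.min'_le _ _ hx, Finset.le_max' _ _ hx⟩)
    (fun _ hx => mem_comp_of_le_of_le (Finset.min'_mem _ _) (Finset.max'_mem _ _)
      (Finset.mem_Icc.1 hx).1 (Finset.mem_Icc.1 hx).2)

lemma natAbs_sub_lt_card_comp (hx : x ∈ comp G i) (hy : y ∈ comp G i) :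
    (x - y).natAbs < (comp G i).card := by
  have hi := mem_of_mem_comp hx
  rw [comp_eq_Icc hi, Finset.mem_Icc] at hx hy
  rw [comp_eq_Icc hi, Int.card_Icc]
  omega

lemma card_comp_le_lam (h : i ∈ G) : (comp G i).card ≤ lam G :=
  Finset.le_sup (f := fun i => (comp G i).card) h

lemma mem_ominus : i ∈ ominus G F ↔ i ∈ G ∧ VertexDisjoint (comp G i) F :=
  Finset.mem_filter

lemma comp_subset_ominus (h : VertexDisjoint (comp G i) F) : comp G i ⊆ ominus G F :=
  fun _ hl => mem_ominus.2 ⟨comp_subset hl, comp_eq_of_mem hl ▸ h⟩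

lemma comp_subset_comp_of_subset (h : comp G i ⊆ H) : comp G i ⊆ comp H i := by
  intro l hl
  have hi := mem_comp_self (mem_of_mem_comp hl)
  refine mem_comp.2 ⟨h hl, fun x h₁ h₂ => h ?_⟩
  rcases le_total i l with h' | h'
  · exact mem_comp_of_le_of_le hi hl (by omega) (by omega)
  · exact mem_comp_of_le_of_le hl hi (by omega) (by omega)

lemma card_comp_le_lam_ominus (h : i ∈ G) (hF : VertexDisjoint (comp G i) F) :
    (comp G i).card ≤ lam (ominus G F) :=
  (Finset.card_le_card (comp_subset_comp_of_subset (comp_subset_ominus hF))).trans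
    (card_comp_le_lam (comp_subset_ominus hF (mem_comp_self h)))

lemma comp_subset_comp_of_adjacent (h : i ∈ G)
    (hadj : ∀ c ∈ comp G i, ∀ y ∈ H, (c - y).natAbs ≤ 1 → y ∈ G) : comp H i ⊆ comp G i := by
  obtain ⟨a, b, hC⟩ : ∃ a b, comp G i = Finset.Icc a b := ⟨_, _, comp_eq_Icc h⟩
  have hi := mem_comp_self h
  rw [hC, Finset.mem_Icc] at hi
  intro y hy
  obtain ⟨-, hyI⟩ := mem_comp.1 hy
  have step : ∀ c d, a ≤ c → c ≤ b → (c - d).natAbs ≤ 1 → min i y ≤ d → d ≤ max i y →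
      a ≤ d ∧ d ≤ b := fun c d hac hcb hcd h₁ h₂ => by
    have hc : c ∈ comp G i := hC ▸ Finset.mem_Icc.2 ⟨hac, hcb⟩
    simpa only [hC, Finset.mem_Icc] using
      mem_comp_of_adjacent hc (hadj c hc d (hyI d h₁ h₂) hcd) hcd
  rw [hC, Finset.mem_Icc]
  by_contra hout
  rcases (by omega : y < a ∨ b < y) with hya | hby
  · have := step a (a - 1) le_rfl (by omega) (by omega) (by omega) (by omega)
    omega
  · have := step b (b + 1) (by omega) le_rfl (by omega) (by omega) (by omega)
    omega

/-- The edge `i` of `Path_ℤ` has midpoint `i - 1/2`. -/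
lemma abs_midpt_sub_le (h : i ∈ H) :
    |midpt H i - ((i : ℝ) - 1 / 2)| ≤ (((comp H i).card : ℝ) - 1) / 2 := by
  have hne : (comp H i).Nonempty := ⟨i, mem_comp_self h⟩
  have hcard := Int.card_Icc ((comp H i).min' hne) ((comp H i).max' hne)
  have ha := Finset.min'_le _ _ (mem_comp_self h)
  have hb := Finset.le_max' _ _ (mem_comp_self h)
  rw [← comp_eq_Icc h] at hcard
  rw [midpt, ← Finset.coe_min' hne, ← Finset.coe_max' hne, WithTop.untopD_coe,
    WithBot.unbotD_coe]
  set a := (comp H i).min' hne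
  set b := (comp H i).max' hne
  have hcard' : ((comp H i).card : ℝ) = b + 1 - a := by
    exact_mod_cast (by omega : ((comp H i).card : ℤ) = b + 1 - a)
  have ha' : (a : ℝ) ≤ i := by exact_mod_cast ha
  have hb' : (i : ℝ) ≤ b := by exact_mod_cast hb
  rw [hcard', abs_le]
  constructor <;> linarith

end Components

section Schedule

/-- A jump `(T, J)` moves the `J`-th graph forward to position `T`, just after the first `T`
graphs. A jump list below `u` lists jumps on disjoint index intervals, from the top down. -/
def IsJumpList : ℕ → List (ℕ × ℕ) → Prop
  | _, [] => True
  | u, (T, J) :: P => T < J ∧ J < u ∧ IsJumpList T P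

/-- The order of `0, …, u - 1` in which every jump `(T, J)` of the list is performed. -/
def schedule : ℕ → List (ℕ × ℕ) → List ℕ
  | u, [] => List.range u
  | u, (T, J) :: P =>
    schedule T P ++ J :: List.range' T (J - T) ++ List.range' (J + 1) (u - (J + 1))

def IsShiftList (s : ℕ) (l : List ℕ) : Prop := ∀ p (hp : p < l.length), s + p ≤ l[p] + 1

lemma IsJumpList.mono {u v : ℕ} {P : List (ℕ × ℕ)} (hP : IsJumpList u P) (huv : u ≤ v) :
    IsJumpList v P := by
  cases P with
  | nil => trivial
  | cons p P => exact ⟨hP.1, hP.2.1.trans_le huv, hP.2.2⟩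

lemma range_split_jump {T J u : ℕ} (hTJ : T < J) (hJu : J < u) :
    List.range u =
      List.range T ++ (List.range' T (J - T) ++ J :: List.range' (J + 1) (u - (J + 1))) := by
  rw [List.range_eq_range', List.range_eq_range', List.range'_eq_append_iff]
  refine ⟨T, by omega, rfl, Eq.symm ?_⟩
  rw [List.range'_eq_append_iff]
  refine ⟨J - T, by omega, by simp, Eq.symm ?_⟩
  rw [List.range'_eq_cons_iff]
  exact ⟨by omega, by omega, by congr 1; omega⟩

lemma schedule_perm : ∀ {u : ℕ} {P : List (ℕ × ℕ)}, IsJumpList u P →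
    (schedule u P).Perm (List.range u)
  | _, [], _ => List.Perm.refl _
  | u, (T, J) :: P, ⟨hTJ, hJu, hP⟩ => by
    rw [schedule, range_split_jump hTJ hJu, List.append_assoc, List.cons_append]
    exact (schedule_perm hP).append (List.perm_middle.symm)

lemma length_schedule {u : ℕ} {P : List (ℕ × ℕ)} (hP : IsJumpList u P) :
    (schedule u P).length = u := by
  simpa using (schedule_perm hP).length_eq

lemma IsShiftList.append {s : ℕ} {l₁ l₂ : List ℕ} (h₁ : IsShiftList s l₁)
    (h₂ : IsShiftList (s + l₁.length) l₂) : IsShiftList s (l₁ ++ l₂) := by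
  intro p hp
  rw [List.getElem_append]
  split_ifs with h
  · exact h₁ p h
  · have := h₂ (p - l₁.length) (by simp at hp; omega)
    omega

lemma IsShiftList.cons {s x : ℕ} {l : List ℕ} (hx : s ≤ x + 1) (hl : IsShiftList (s + 1) l) :
    IsShiftList s (x :: l) := by
  rintro (_ | p) hp
  · exact hx
  · have := hl p (by simpa using hp)
    simp only [List.getElem_cons_succ]
    omega

lemma isShiftList_range' {s t n : ℕ} (h : t ≤ s + 1) : IsShiftList t (List.range' s n) := by
  intro p hp
  rw [List.getElem_range']
  omega

lemma isShiftList_schedule : ∀ {u : ℕ} {P : List (ℕ × ℕ)}, IsJumpList u P →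
    IsShiftList 0 (schedule u P)
  | _, [], _ => by
    rw [schedule, List.range_eq_range']
    exact isShiftList_range' (by omega)
  | u, (T, J) :: P, ⟨hTJ, hJu, hP⟩ => by
    refine ((isShiftList_schedule hP).append ?_).append ?_
    · rw [length_schedule hP]
      exact IsShiftList.cons (by omega) (isShiftList_range' (by omega))
    · simp only [List.length_append, List.length_cons, List.length_range', length_schedule hP]
      exact isShiftList_range' (by omega)

end Schedule

section Gain

variable (A : ℕ → PGraph)

def prefixUnion (t : ℕ) : PGraph := (Finset.range t).biUnion A

def jumpGain : List (ℕ × ℕ) → ℕ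
  | [] => 0
  | (T, J) :: P => lam (ominus (A J) (prefixUnion A T)) + jumpGain P

variable {A}

lemma lvecFrom_append (F : PGraph) (L₁ L₂ : List PGraph) :
    lvecFrom F (L₁ ++ L₂) = lvecFrom F L₁ + lvecFrom (L₁.foldl (· ∪ ·) F) L₂ := by
  induction L₁ generalizing F with
  | nil => simp [lvecFrom]
  | cons G L₁ ih => simp only [List.cons_append, lvecFrom, ih, List.foldl_cons, Nat.add_assoc]

lemma foldl_union_map (F : PGraph) (l : List ℕ) :
    (l.map A).foldl (· ∪ ·) F = F ∪ l.toFinset.biUnion A := by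
  induction l generalizing F with
  | nil => simp
  | cons i l ih => simp [ih, Finset.union_assoc]

lemma jumpGain_le_lvecFrom_schedule : ∀ {u : ℕ} {P : List (ℕ × ℕ)}, IsJumpList u P →
    jumpGain A P ≤ lvecFrom ∅ ((schedule u P).map A)
  | _, [], _ => Nat.zero_le _
  | u, (T, J) :: P, ⟨_, _, hP⟩ => by
    have hprefix : ((schedule T P).map A).foldl (· ∪ ·) ∅ = prefixUnion A T := by
      rw [foldl_union_map, Finset.empty_union, List.toFinset_eq_of_perm _ _ (schedule_perm hP),
        List.toFinset_range, prefixUnion]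
    rw [schedule, List.map_append, List.map_append, lvecFrom_append, lvecFrom_append, hprefix,
      List.map_cons, lvecFrom, jumpGain]
    have := jumpGain_le_lvecFrom_schedule hP
    omega

end Gain

lemma vertexDisjoint_prefixUnion_iff {C : PGraph} {A : ℕ → PGraph} {t : ℕ} :
    VertexDisjoint C (prefixUnion A t) ↔ ∀ i < t, VertexDisjoint C (A i) := by
  simp only [VertexDisjoint, prefixUnion, Finset.mem_biUnion, Finset.mem_range]
  exact ⟨fun h i hi c hc f hf => h c hc f ⟨i, hi, hf⟩,
    fun h c hc f ⟨i, hi, hf⟩ => h i hi c hc f hf⟩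

lemma exists_residual_near (A : ℕ → PGraph) (j : ℕ) {e : ℤ} (he : e ∈ A j) :
    ∃ i ≤ j, ∃ z ∈ ominus (A i) (prefixUnion A i), ∃ P₁ P₂, IsJumpList (j + 1) P₁ ∧
      IsJumpList j P₂ ∧ (z - e).natAbs ≤ jumpGain A P₁ + jumpGain A P₂ := by
  classical
  induction j using Nat.strong_induction_on generalizing e with | _ j IH =>
  by_cases hT : ∃ t < j, ¬VertexDisjoint (comp (A j) e) (A t)
  · obtain ⟨htj, htouch⟩ := Nat.find_spec hT
    set t := Nat.find hT
    have hfirst : ∀ i < t, VertexDisjoint (comp (A j) e) (A i) := fun i hi =>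
      not_not.1 fun h => Nat.find_min hT hi ⟨hi.trans htj, h⟩
    simp only [VertexDisjoint, not_forall, not_lt] at htouch
    obtain ⟨c, hc, f, hf, hcf⟩ := htouch
    obtain ⟨i, hit, z, hz, Q₁, Q₂, hQ₁, hQ₂, hzf⟩ := IH t htj hf
    have hjump := card_comp_le_lam_ominus he (vertexDisjoint_prefixUnion_iff.2 hfirst)
    have hec := natAbs_sub_lt_card_comp (mem_comp_self he) hc
    -- The lists swap roles: `(t, j)` sits on top of `Q₂`, and `Q₁` lies below `t + 1 ≤ j`.
    refine ⟨i, by omega, z, hz, (t, j) :: Q₂, Q₁, ⟨htj, j.lt_succ_self, hQ₂⟩, hQ₁.mono htj, ?_⟩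
    rw [jumpGain]
    omega
  · push Not at hT
    exact ⟨j, le_rfl, e, mem_ominus.2 ⟨he, vertexDisjoint_prefixUnion_iff.2 hT⟩, [], [], trivial,
      trivial, by simp [jumpGain]⟩

lemma exists_perm_map_val_eq {m : ℕ} {l : List ℕ} (hl : l.Perm (List.range m)) :
    ∃ σ : Equiv.Perm (Fin m), (List.finRange m).map (fun p => (σ p : ℕ)) = l := by
  have hnd : l.Nodup := hl.nodup_iff.2 List.nodup_range
  have hlen : l.length = m := by simpa using hl.length_eq
  have hlt (p : Fin m) : l[p.1]'(hlen ▸ p.2) < m :=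
    List.mem_range.1 (hl.subset (List.getElem_mem _))
  let f : Fin m → Fin m := fun p => ⟨l[p.1]'(hlen ▸ p.2), hlt p⟩
  have hf : Function.Injective f := fun p q h =>
    Fin.ext (hnd.getElem_inj_iff.1 (congrArg Fin.val h))
  exact ⟨Equiv.ofBijective f hf.bijective_of_finite,
    List.ext_getElem (by simp [hlen]) fun p _ _ => by simp [f]⟩

section FinSeq

variable {m : ℕ} {G : Fin m → PGraph}

variable (G) in
def extendSeq (n : ℕ) : PGraph := if h : n < m then G ⟨n, h⟩ else ∅

lemma extendSeq_val (j : Fin m) : extendSeq G j = G j := by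
  simp [extendSeq]

lemma lt_of_mem_extendSeq {n : ℕ} {x : ℤ} (h : x ∈ extendSeq G n) : n < m := by
  by_contra hn
  simp [extendSeq, hn] at h

lemma mem_unionBelow {j : Fin m} {x : ℤ} : x ∈ unionBelow G j ↔ ∃ i < j, x ∈ G i := by
  simp [unionBelow]

lemma prefixUnion_extendSeq (j : Fin m) : prefixUnion (extendSeq G) j = unionBelow G j := by
  ext x
  simp only [prefixUnion, Finset.mem_biUnion, Finset.mem_range, mem_unionBelow]
  constructor
  · rintro ⟨i, hi, hx⟩
    have him := lt_of_mem_extendSeq hx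
    exact ⟨⟨i, him⟩, Fin.mk_lt_of_lt_val hi, by simpa [extendSeq, him] using hx⟩
  · rintro ⟨i, hi, hx⟩
    exact ⟨i, hi, by rwa [extendSeq_val]⟩

lemma mem_residUnion {z : ℤ} : z ∈ residUnion G ↔ ∃ j, z ∈ ominus (G j) (unionBelow G j) := by
  simp [residUnion]

lemma exists_shiftPerm_jumpGain_le {P : List (ℕ × ℕ)} (hP : IsJumpList m P) :
    ∃ σ : Equiv.Perm (Fin m), IsShiftPerm σ ∧
      jumpGain (extendSeq G) P ≤ lvec (seqList fun a => G (σ a)) := by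
  obtain ⟨σ, hσ⟩ := exists_perm_map_val_eq (schedule_perm hP)
  have hseq : seqList (fun a => G (σ a)) = (schedule m P).map (extendSeq G) := by
    rw [← hσ, List.map_map, seqList]
    exact List.map_congr_left fun p _ => (extendSeq_val (σ p)).symm
  refine ⟨σ, fun j => ?_, hseq ▸ jumpGain_le_lvecFrom_schedule hP⟩
  have := isShiftList_schedule hP j (by rw [length_schedule hP]; exact j.2)
  simpa [← hσ] using this

lemma mem_of_adjacent_residUnion {j : Fin m} {x y : ℤ} (hx : x ∈ ominus (G j) (unionBelow G j))
    (hy : y ∈ residUnion G) (hxy : (x - y).natAbs ≤ 1) : y ∈ G j := by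
  obtain ⟨hxG, hxF⟩ := mem_ominus.1 hx
  obtain ⟨j', hy'⟩ := mem_residUnion.1 hy
  obtain ⟨hyG, hyF⟩ := mem_ominus.1 hy'
  rcases lt_trichotomy j' j with h | rfl | h
  · have := hxF x (mem_comp_self hxG) y (mem_unionBelow.2 ⟨j', h, hyG⟩)
    omega
  · exact hyG
  · have := hyF y (mem_comp_self hyG) x (mem_unionBelow.2 ⟨j, h, hxG⟩)
    omega

lemma card_comp_residUnion_le {z : ℤ} (hz : z ∈ residUnion G) :
    (comp (residUnion G) z).card ≤ Finset.univ.sup fun j => lam (G j) := by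
  obtain ⟨j, hj⟩ := mem_residUnion.1 hz
  obtain ⟨hzG, hzF⟩ := mem_ominus.1 hj
  have hsub : comp (residUnion G) z ⊆ comp (G j) z :=
    comp_subset_comp_of_adjacent hzG fun c hc _ hy hcy =>
      mem_of_adjacent_residUnion (comp_subset_ominus hzF hc) hy hcy
  calc (comp (residUnion G) z).card ≤ (comp (G j) z).card := Finset.card_le_card hsub
    _ ≤ lam (G j) := card_comp_le_lam hzG
    _ ≤ _ := Finset.le_sup (f := fun j => lam (G j)) (Finset.mem_univ j)

lemma exists_residUnion_near {M : ℕ}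
    (hM : ∀ P, IsJumpList m P → jumpGain (extendSeq G) P ≤ M) {n : ℤ}
    (hn : n ∈ Finset.univ.biUnion G) : ∃ z ∈ residUnion G, (z - n).natAbs ≤ 2 * M := by
  obtain ⟨j, -, hj⟩ := Finset.mem_biUnion.1 hn
  rw [← extendSeq_val (G := G)] at hj
  obtain ⟨i, hij, z, hz, P₁, P₂, hP₁, hP₂, hzn⟩ := exists_residual_near _ j hj
  have him : i < m := hij.trans_lt j.2
  have h₁ := hM P₁ (hP₁.mono j.2)
  have h₂ := hM P₂ (hP₂.mono j.2.le)
  refine ⟨z, mem_residUnion.2 ⟨⟨i, him⟩, ?_⟩, by omega⟩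
  rwa [← extendSeq_val (G := G), ← prefixUnion_extendSeq]

end FinSeq

lemma exists_mem_pathk_near {k : ℕ} (hk : 1 ≤ k) {y : ℝ} (hy : y ∈ Set.Icc (0 : ℝ) k) :
    ∃ n ∈ pathk k, |(n : ℝ) - 1 / 2 - y| ≤ 1 / 2 := by
  refine ⟨max 1 ⌈y⌉, Finset.mem_Icc.2 ⟨le_max_left _ _, max_le (by exact_mod_cast hk)
    (Int.ceil_le.2 (by exact_mod_cast hy.2))⟩, abs_le.2 ⟨?_, ?_⟩⟩ <;> push_cast
  · linarith [le_max_right (1 : ℝ) ⌈y⌉, Int.le_ceil y]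
  · linarith [max_le (by linarith [hy.1] : (1 : ℝ) ≤ y + 1) (Int.ceil_lt_add_one y).le]

lemma gapOf_le {k : ℕ} (hk : 1 ≤ k) {H : PGraph} {L D : ℕ}
    (hL : ∀ z ∈ H, (comp H z).card ≤ L)
    (hD : ∀ n ∈ pathk k, ∃ z ∈ H, (z - n).natAbs ≤ D) : gapOf k H ≤ L / 2 + D := by
  have : Nonempty (Set.Icc (0 : ℝ) k) := ⟨⟨0, le_rfl, Nat.cast_nonneg k⟩⟩
  refine ciSup_le fun ⟨y, hy⟩ => ?_
  obtain ⟨n, hn, hny⟩ := exists_mem_pathk_near hk hy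
  obtain ⟨z, hz, hzn⟩ := hD n hn
  have hmid := abs_le.1 (abs_midpt_sub_le hz)
  have hcard : ((comp H z).card : ℝ) ≤ L := by exact_mod_cast hL z hz
  have hzn' : |(z : ℝ) - n| ≤ D := by
    rw [← Int.cast_sub, ← Int.cast_abs, ← Nat.cast_natAbs]
    exact_mod_cast hzn
  have hbdd : BddBelow ((fun i => |midpt H i - y|) '' (H : Set ℤ)) :=
    ⟨0, by rintro _ ⟨_, _, rfl⟩; exact abs_nonneg _⟩
  refine (csInf_le hbdd ⟨z, hz, rfl⟩).trans (abs_le.2 ⟨?_, ?_⟩) <;>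
    linarith [abs_le.1 hny, abs_le.1 hzn']

/-- **Lemma 5.10.**  Let `G_1 ∪ ⋯ ∪ G_m = Path_k` and `g := gap(G_1,…,G_m)`.  Then there is a
shift permutation `σ` with `λ⃗(G_{σ(1)},…,G_{σ(m)}) ≥ (g − max_j λ(G_j))/2`. -/
theorem gap_shift_lemma (k m : ℕ) (hk : 1 ≤ k) (G : Fin m → PGraph)
    (hcov : Finset.univ.biUnion G = pathk k) :
    ∃ σ : Equiv.Perm (Fin m), IsShiftPerm σ ∧
      (gapSeq k G - (((Finset.univ.sup fun j => lam (G j)) : ℕ) : ℝ)) / 2 ≤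
        (lvec (seqList fun a => G (σ a)) : ℝ) := by
  classical
  have hid : (1 : Equiv.Perm (Fin m)) ∈ Finset.univ.filter IsShiftPerm :=
    Finset.mem_filter.2 ⟨Finset.mem_univ _, fun j => by simp⟩
  obtain ⟨σ, hσ, hmax⟩ := (Finset.univ.filter IsShiftPerm).exists_max_image
    (fun σ => lvec (seqList fun a => G (σ a))) ⟨1, hid⟩
  have hM (P : List (ℕ × ℕ)) (hP : IsJumpList m P) :
      jumpGain (extendSeq G) P ≤ lvec (seqList fun a => G (σ a)) := by
    obtain ⟨τ, hτ, hτP⟩ := exists_shiftPerm_jumpGain_le hP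
    exact hτP.trans (hmax τ (by simpa using hτ))
  have hgap := gapOf_le hk (fun _ => card_comp_residUnion_le)
    fun n hn => exists_residUnion_near hM (hcov ▸ hn)
  refine ⟨σ, (Finset.mem_filter.1 hσ).2, ?_⟩
  rw [gapSeq]
  push_cast at hgap ⊢
  linarith [(Finset.univ.sup fun j => lam (G j)).cast_nonneg (α := ℝ)]
end
end
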